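/- arXiv:1205.1646 — 2 statements merged into one kernel-verified Lean document; each statement's English description precedes it below -/
import Mathlib

section
/- If D > 0 is rational, h ∈ ℚ, and y(X) = y₁X + y₀ ∈ ℚ[X] satisfy D·y(X)^2 = 4h·(X^2 − X + 1) − (X−1)^2 as polynomials, then h = 1/3. -/
open Polynomial

theorem stmt_4 (D h y₁ y₀ : ℚ) (hD : 0 < D)
    (heq : C D * (C y₁ * X + C y₀) ^ 2
        = C (4 * h) * (X ^ 2 - X + 1) - (X - 1) ^ 2) :
    h = 1 / 3 := by
  have e0 := congrArg (Polynomial.eval 0) heq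
  have e1 := congrArg (Polynomial.eval 1) heq
  have e2 := congrArg (Polynomial.eval (-1)) heq
  simp only [eval_mul, eval_add, eval_sub, eval_pow, eval_C, eval_X, eval_one] at e0 e1 e2
  -- Dy₀² = 4h-1, D(y₁+y₀)² = 4h, D(y₀-y₁)² = 12h-4
  have hsq : y₁ ^ 2 = y₀ ^ 2 := by
    have : D * y₁ ^ 2 = D * y₀ ^ 2 := by nlinarith [e0, e1, e2]
    exact mul_left_cancel₀ (ne_of_gt hD) this
  have hfac : (y₁ - y₀) * (y₁ + y₀) = 0 := by ring_nf; linarith [hsq]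
  rcases mul_eq_zero.mp hfac with h' | h'
  · have hy : y₁ = y₀ := by linarith
    subst hy
    nlinarith
  · have hy : y₁ = -y₀ := by linarith
    subst hy
    exfalso
    have hh : h = 0 := by nlinarith
    subst hh
    nlinarith [sq_nonneg y₀, mul_nonneg hD.le (sq_nonneg y₀)]
end

section
/- Let p be a prime ≡ 3 mod 4, p ≥ 7, ζ_p a primitive p-th root of unity, g an integer coprime to p with χ_p(g+1) = 1. Then in the expansion (ζ_p^g − 1)·∑_{a=0}^{p−1} χ_p(a)ζ_p^a = ∑_{a=0}^{p−1} (χ_p(a−g) − χ_p(a)) ζ_p^a, there exists b with (p−1)/2 + 1 ≤ b ≤ p−2 such that the coefficient χ_p(b−g) − χ_p(b) is nonzero. -/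
lemma aux_sum_range_zmod (p : ℕ) [NeZero p] (f : ZMod p → ℂ) :
    ∑ a ∈ Finset.range p, f (a : ZMod p) = ∑ x : ZMod p, f x := by
  refine Finset.sum_nbij' (fun a => (a : ZMod p)) (fun x => x.val) ?_ ?_ ?_ ?_ ?_
  · intro a _; exact Finset.mem_univ _
  · intro x _; exact Finset.mem_range.mpr (ZMod.val_lt x)
  · intro a ha; exact ZMod.val_cast_of_lt (Finset.mem_range.mp ha)
  · intro x _; simp [ZMod.natCast_val, ZMod.cast_id]
  · intro a _; rfl

lemma aux_leg_eq (p : ℕ) [Fact p.Prime] (z : ℤ) :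
    legendreSym p z = quadraticChar (ZMod p) ((z : ℤ) : ZMod p) := rfl

theorem stmt_15 (p : ℕ) [Fact p.Prime] (hp3 : p % 4 = 3) (hp7 : 7 ≤ p)
    (ζ : ℂ) (hζ : IsPrimitiveRoot ζ p) (g : ℤ) (hg : IsCoprime g (p : ℤ))
    (hg1 : legendreSym p (g + 1) = 1) :
    (ζ ^ g - 1) * ∑ a ∈ Finset.range p, (legendreSym p a : ℂ) * ζ ^ a
      = ∑ a ∈ Finset.range p, ((legendreSym p ((a : ℤ) - g) : ℂ)
          - (legendreSym p a : ℂ)) * ζ ^ a ∧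
    ∃ b : ℤ, ((p : ℤ) - 1) / 2 + 1 ≤ b ∧ b ≤ (p : ℤ) - 2 ∧
      legendreSym p (b - g) - legendreSym p b ≠ 0 := by
  have hp : p.Prime := Fact.out
  haveI : NeZero p := ⟨hp.ne_zero⟩
  have hζ0 : ζ ≠ 0 := hζ.ne_zero hp.ne_zero
  have hzp : ζ ^ p = 1 := hζ.pow_eq_one
  set χ : MulChar (ZMod p) ℤ := quadraticChar (ZMod p) with hχdef
  set g' : ZMod p := (g : ZMod p) with hg'def
  have hg'0 : g' ≠ 0 := by
    intro h
    have hdvd : (p : ℤ) ∣ g := (ZMod.intCast_zmod_eq_zero_iff_dvd g p).mp h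
    have hu := hg.isUnit_of_dvd' hdvd dvd_rfl
    rw [Int.isUnit_iff] at hu
    omega
  have hgp1 : g' + 1 ≠ 0 := by
    intro h
    have : legendreSym p (g + 1) = 0 := by
      rw [legendreSym.eq_zero_iff]
      push_cast
      rw [← hg'def] at *
      exact h
    omega
  -- ζ ^ g = ζ ^ (g'.val)
  have hzg : ζ ^ g = ζ ^ g'.val := by
    obtain ⟨k, hk⟩ : (p : ℤ) ∣ (g - (g'.val : ℤ)) := by
      rw [← ZMod.intCast_zmod_eq_zero_iff_dvd]
      push_cast
      simp [ZMod.natCast_val, ZMod.cast_id, hg'def]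
    have hgk : g = (g'.val : ℤ) + (p : ℤ) * k := by linarith
    rw [hgk, zpow_add₀ hζ0, zpow_natCast, zpow_mul, zpow_natCast, hzp, one_zpow, mul_one]
  have hval : ∀ x y : ZMod p, ζ ^ (x + y).val = ζ ^ x.val * ζ ^ y.val := by
    intro x y
    rw [← pow_add, ZMod.val_add]
    conv_rhs => rw [← Nat.mod_add_div (x.val + y.val) p, pow_add, pow_mul, hzp, one_pow, mul_one]
  constructor
  · -- Part 1
    have hL : ∑ a ∈ Finset.range p, (legendreSym p a : ℂ) * ζ ^ a
        = ∑ x : ZMod p, ((χ x : ℤ) : ℂ) * ζ ^ x.val := by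
      rw [← aux_sum_range_zmod p (fun x => ((χ x : ℤ) : ℂ) * ζ ^ x.val)]
      refine Finset.sum_congr rfl fun a ha => ?_
      have hlt := Finset.mem_range.mp ha
      rw [aux_leg_eq, ZMod.val_cast_of_lt hlt]
      push_cast
      rfl
    have hR : ∑ a ∈ Finset.range p, ((legendreSym p ((a : ℤ) - g) : ℂ)
          - (legendreSym p a : ℂ)) * ζ ^ a
        = ∑ x : ZMod p, (((χ (x - g') : ℤ) : ℂ) - ((χ x : ℤ) : ℂ)) * ζ ^ x.val := by
      rw [← aux_sum_range_zmod p (fun x => (((χ (x - g') : ℤ) : ℂ) - ((χ x : ℤ) : ℂ)) * ζ ^ x.val)]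
      refine Finset.sum_congr rfl fun a ha => ?_
      have hlt := Finset.mem_range.mp ha
      rw [aux_leg_eq, aux_leg_eq, ZMod.val_cast_of_lt hlt]
      push_cast
      rfl
    rw [hL, hR]
    have hmain : ζ ^ g * ∑ x : ZMod p, ((χ x : ℤ) : ℂ) * ζ ^ x.val
        = ∑ x : ZMod p, ((χ (x - g') : ℤ) : ℂ) * ζ ^ x.val := by
      rw [Finset.mul_sum]
      refine Fintype.sum_bijective (· + g') (Equiv.addRight g').bijective
        (fun y => ζ ^ g * (((χ y : ℤ) : ℂ) * ζ ^ y.val))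
        (fun x => ((χ (x - g') : ℤ) : ℂ) * ζ ^ x.val) fun y => ?_
      show ζ ^ g * (((χ y : ℤ) : ℂ) * ζ ^ y.val) = ((χ (y + g' - g') : ℤ) : ℂ) * ζ ^ (y + g').val
      rw [add_sub_cancel_right, hval, hzg]
      ring
    rw [sub_mul, one_mul, hmain]
    rw [← Finset.sum_sub_distrib]
    refine Finset.sum_congr rfl fun x _ => ?_
    ring
  · -- Part 2
    set r : ℕ := g'.val with hrdef
    have hrlt : r < p := ZMod.val_lt g'
    have hr0 : r ≠ 0 := fun h => hg'0 (by rwa [ZMod.val_eq_zero] at h)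
    have hrcast : ((r : ℕ) : ZMod p) = g' := by simp [hrdef, ZMod.natCast_val, ZMod.cast_id]
    have hrne : r ≠ p - 1 := by
      intro h
      apply hgp1
      have : g' = ((p - 1 : ℕ) : ZMod p) := by rw [← hrcast, h]
      rw [this]
      have h1p : (1:ℕ) ≤ p := by omega
      push_cast [Nat.cast_sub h1p]
      simp
    by_cases hcase : (p - 1) / 2 + 1 ≤ r
    · -- b = r works
      refine ⟨(r : ℤ), by omega, by omega, ?_⟩
      have h1 : legendreSym p ((r : ℤ) - g) = 0 := by
        rw [legendreSym.eq_zero_iff]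
        push_cast
        rw [hrcast, ← hg'def, sub_self]
      have h2 : legendreSym p (r : ℤ) ≠ 0 := by
        rw [Ne, legendreSym.eq_zero_iff]
        push_cast
        rw [hrcast]
        exact hg'0
      omega
    · -- counting argument
      push_neg at hcase
      have hrle : r ≤ (p - 1) / 2 := by omega
      by_contra hcon
      push_neg at hcon
      have hcon' : ∀ b : ℤ, ((p : ℤ) - 1) / 2 + 1 ≤ b → b ≤ (p : ℤ) - 2 →
          legendreSym p (b - g) = legendreSym p b := by
        intro b h1 h2
        have := hcon b h1 h2
        omega
      classical
      set T : Finset (ZMod p) := (Finset.Ico ((p - 1) / 2 + 1) p).image (Nat.cast) with hTdef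
      have hTcard : T.card = (p - 1) / 2 := by
        rw [hTdef, Finset.card_image_of_injOn, Nat.card_Ico]
        · omega
        · intro a ha b hb hab
          have ha' := (Finset.mem_Ico.mp ha).2
          have hb' := (Finset.mem_Ico.mp hb).2
          have := congrArg ZMod.val hab
          rwa [ZMod.val_cast_of_lt ha', ZMod.val_cast_of_lt hb'] at this
      -- key fact for members of T (and also -1)
      have hkey : ∀ x ∈ T, χ x * χ (x - g') = 1 := by
        intro x hx
        obtain ⟨a, ha, rfl⟩ := Finset.mem_image.mp hx
        obtain ⟨ha1, ha2⟩ := Finset.mem_Ico.mp ha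
        have hx0 : ((a : ℕ) : ZMod p) ≠ 0 := by
          intro h
          have := congrArg ZMod.val h
          rw [ZMod.val_cast_of_lt ha2, ZMod.val_zero] at this
          omega
        by_cases hap : a = p - 1
        · -- x = -1
          have hxm1 : ((a : ℕ) : ZMod p) = -1 := by
            subst hap
            have h1p : (1:ℕ) ≤ p := by omega
            push_cast [Nat.cast_sub h1p]
            simp
          rw [hxm1, ← map_mul]
          have h1g : (-1 : ZMod p) * (-1 - g') = g' + 1 := by ring
          rw [h1g]
          have hthis := hg1
          rw [aux_leg_eq] at hthis
          push_cast at hthis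
          rw [← hg'def] at hthis
          exact hthis
        · -- a ≤ p - 2 : use hcon'
          have heq := hcon' (a : ℤ) (by omega) (by omega)
          rw [aux_leg_eq, aux_leg_eq] at heq
          push_cast at heq
          rw [← hg'def] at heq
          rw [heq]
          have := quadraticChar_sq_one hx0
          rwa [sq] at this
      -- the injective map into squares
      set φ : ZMod p → ZMod p := fun x => 1 - g' * x⁻¹ with hφdef
      set Q : Finset (ZMod p) :=
        (Finset.univ.erase (0 : ZMod p)).filter (fun t => χ t = 1) with hQdef
      have hT0 : ∀ x ∈ T, x ≠ 0 := by
        intro x hx h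
        obtain ⟨a, ha, rfl⟩ := Finset.mem_image.mp hx
        obtain ⟨ha1, ha2⟩ := Finset.mem_Ico.mp ha
        have := congrArg ZMod.val h
        rw [ZMod.val_cast_of_lt ha2, ZMod.val_zero] at this
        omega
      have hmaps : ∀ x ∈ T, φ x ∈ Q.erase 1 := by
        intro x hx
        have hx0 := hT0 x hx
        have hφ1 : φ x ≠ 1 := by
          intro h
          have h' : 1 - g' * x⁻¹ = 1 := h
          rw [sub_eq_self] at h'
          rcases mul_eq_zero.mp h' with h | h
          · exact hg'0 h
          · exact hx0 (inv_eq_zero.mp h)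
        have hχφ : χ (φ x) = 1 := by
          have hxx : x * (x - g') = x ^ 2 * φ x := by
            rw [hφdef]
            field_simp
          have h1 : χ (x * (x - g')) = 1 := by rw [map_mul]; exact hkey x hx
          rw [hxx, map_mul, quadraticChar_sq_one' hx0, one_mul] at h1
          exact h1
        have hφ0 : φ x ≠ 0 := by
          intro h
          rw [h, hχdef, quadraticChar_zero] at hχφ
          exact absurd hχφ (by norm_num)
        rw [Finset.mem_erase, hQdef, Finset.mem_filter, Finset.mem_erase]
        exact ⟨hφ1, ⟨hφ0, Finset.mem_univ _⟩, hχφ⟩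
      have hinj : Set.InjOn φ T := by
        intro x hx y hy hxy
        have hx0 := hT0 x hx
        have hy0 := hT0 y hy
        have hxy' : 1 - g' * x⁻¹ = 1 - g' * y⁻¹ := hxy
        have h2 : g' * x⁻¹ = g' * y⁻¹ := by linear_combination -hxy'
        have := mul_left_cancel₀ hg'0 h2
        exact inv_injective this
      have hcardle : T.card ≤ (Q.erase 1).card :=
        Finset.card_le_card_of_injOn φ hmaps hinj
      -- card Q = (p-1)/2
      have hchar2 : ringChar (ZMod p) ≠ 2 := by
        rw [ZMod.ringChar_zmod_n]
        omega
      have hQcard : Q.card = (p - 1) / 2 := by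
        have hsum := quadraticChar_sum_zero (F := ZMod p) hchar2
        have hzero : χ (0 : ZMod p) = 0 := by simp [hχdef]
        have hU : ∑ t ∈ Finset.univ.erase (0 : ZMod p), χ t = 0 := by
          rw [Finset.sum_erase _ hzero]
          exact hsum
        set U := Finset.univ.erase (0 : ZMod p) with hUdef
        rw [← Finset.sum_filter_add_sum_filter_not U (fun t => χ t = 1)] at hU
        have h1 : ∑ t ∈ U.filter (fun t => χ t = 1), χ t
            = ((U.filter (fun t => χ t = 1)).card : ℤ) := by
          rw [Finset.sum_congr rfl (fun t ht => (Finset.mem_filter.mp ht).2),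
            Finset.sum_const, nsmul_eq_mul, mul_one]
        have h2 : ∑ t ∈ U.filter (fun t => ¬ χ t = 1), χ t
            = -((U.filter (fun t => ¬ χ t = 1)).card : ℤ) := by
          rw [Finset.sum_congr rfl (fun t ht => ?_), Finset.sum_const, nsmul_eq_mul,
            mul_neg_one]
          obtain ⟨htU, htχ⟩ := Finset.mem_filter.mp ht
          have ht0 : t ≠ 0 := (Finset.mem_erase.mp htU).1
          rcases quadraticChar_dichotomy ht0 with h | h
          · exact absurd h htχ
          · exact h
        rw [h1, h2] at hU
        have hcards : (U.filter (fun t => χ t = 1)).card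
            + (U.filter (fun t => ¬ χ t = 1)).card = U.card :=
          Finset.card_filter_add_card_filter_not _
        have hUcard : U.card = p - 1 := by
          rw [hUdef, Finset.card_erase_of_mem (Finset.mem_univ _), Finset.card_univ,
            ZMod.card]
        rw [hQdef]
        omega
      have h1Q : (1 : ZMod p) ∈ Q := by
        rw [hQdef, Finset.mem_filter, Finset.mem_erase]
        exact ⟨⟨one_ne_zero, Finset.mem_univ _⟩, by simp [hχdef]⟩
      have := Finset.card_erase_of_mem h1Q
      omega
end
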